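/- Let p be a prime and let a ≥ 1 and n > 1 be integers. If (p^{an} − 1)/(p^a − 1) is a power of a prime, i.e., equal to ℓ^k for some prime ℓ and some integer k ≥ 1, then n is a prime and either a is a power of n, or p = 2, a = 3 and n = 2. -/

import Mathlib

/-!
Put `q = p ^ a`, so that the quotient is `1 + q + ⋯ + q ^ (n - 1) = ℓ ^ k`.

If `ℓ = 2`, then `q` is odd and `n = 2t` is even, and `q ^ t + 1` divides the sum, so it is a
power of `2`. For odd `x > 1`, `x ^ t + 1` is a power of `2` only when `t = 1`. Hence `n = 2`, and
applying the same fact to `p ^ a + 1 = 2 ^ k` gives `a = 1`.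

If `ℓ` is odd, let `e` be the order of `p` modulo `ℓ`. For every `d ∣ an` with `d ∤ a`, the
cyclotomic value `Φ_d(p) > 1` divides `ℓ ^ k`, so `ℓ ∣ Φ_d(p)` and `e ∣ d`. If `e ∣ a`, then lifting
the exponent gives `ℓ ^ k ∣ n`, which is too small. Taking `d = w ^ (v_w(a) + 1)` for the primes
`w ∣ n` then shows that `n = u ^ r` and `e = u ^ (v_u(a) + 1)`. Writing `a = u ^ v_u(a) * m`,
lifting the exponent again gives `ℓ ^ k ≤ (p ^ e - 1) m`. Comparing this with
`ℓ ^ k > p ^ (a (n - 1))` forces `r = 1` and `m = 1`, unless `p = 2`, `a = 3` and `n = 2`.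
-/

open Finset Polynomial

theorem geom_sum_mul_sub_one (q n : ℕ) : (∑ i ∈ range n, q ^ i) * (q - 1) = q ^ n - 1 := by
  rcases q with _ | q
  · cases n <;> simp
  · have := geom_sum_mul_add q n
    simp only [Nat.add_sub_cancel]
    omega

theorem pow_pred_lt_geom_sum (q : ℕ) {n : ℕ} (hn : 1 < n) :
    q ^ (n - 1) < ∑ i ∈ range n, q ^ i := by
  obtain ⟨m, rfl⟩ := Nat.exists_eq_add_of_lt hn
  rw [show 1 + m + 1 = m + 1 + 1 by omega, Nat.add_sub_cancel, sum_range_succ, sum_range_succ',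
    pow_zero]
  omega

theorem self_lt_geom_sum {q n : ℕ} (hq : 1 < q) (hn : 1 < n) : n < ∑ i ∈ range n, q ^ i :=
  calc n = ∑ i ∈ range n, 1 := by simp
    _ < ∑ i ∈ range n, q ^ i :=
      sum_lt_sum (fun i _ => Nat.one_le_pow _ _ (by omega)) ⟨1, by simpa, by simpa⟩

theorem geom_sum_two_mul {R : Type*} [CommSemiring R] (x : R) (t : ℕ) :
    ∑ i ∈ range (2 * t), x ^ i = (∑ i ∈ range t, x ^ i) * (x ^ t + 1) := by
  simp only [two_mul, sum_range_add, pow_add, ← mul_sum]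
  ring

theorem even_geom_sum_iff {q n : ℕ} (hn : n ≠ 0) :
    Even (∑ i ∈ range n, q ^ i) ↔ Odd q ∧ Even n := by
  rw [Finset.even_sum_iff_even_card_odd]
  rcases Nat.even_or_odd q with hq | hq
  · have : {i ∈ range n | Odd (q ^ i)} = {0} := by
      ext i
      simp [← Nat.not_even_iff_odd, Nat.even_pow, hq, Nat.pos_of_ne_zero hn]
    simp [this, Nat.not_odd_iff_even.2 hq]
  · simp [hq.pow, hq]

theorem not_dvd_of_dvd_sub_one {ℓ x : ℕ} (hℓ : ℓ ≠ 1) (hx : 0 < x) (h : ℓ ∣ x - 1) : ¬ ℓ ∣ x :=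
  fun hℓx => hℓ (Nat.dvd_one.1 (by simpa [Nat.sub_sub_self hx] using Nat.dvd_sub hℓx h))

theorem eq_one_of_pow_add_one_eq_two_pow {x t j : ℕ} (hx : Odd x) (hx1 : 1 < x) (ht : t ≠ 0)
    (h : x ^ t + 1 = 2 ^ j) : t = 1 := by
  rcases Nat.even_or_odd t with ⟨s, rfl⟩ | hto
  · have hj : 2 ≤ j := by
      by_contra! hj
      have : x ≤ x ^ (s + s) := Nat.le_self_pow ht x
      interval_cases j <;> omega
    have h4 : 4 ∣ (x ^ s) ^ 2 + 1 := by
      rw [← pow_mul, mul_two, h]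
      exact pow_dvd_pow 2 hj
    have h8 := Nat.eight_dvd_sq_sub_one_of_odd (hx.pow (n := s))
    have : 1 ≤ (x ^ s) ^ 2 := Nat.one_le_pow _ _ (by positivity)
    omega
  · -- `x ^ t + 1 = (x + 1) * c` with `c = ∑ (-x) ^ i` odd, and `c ∣ 2 ^ j` forces `c = 1`
    set c : ℤ := ∑ i ∈ range t, (-(x : ℤ)) ^ i with hc_def
    have hc : c * (x + 1) = x ^ t + 1 := by
      have := geom_sum_mul (-(x : ℤ)) t
      rw [hto.neg_pow] at this
      linear_combination -this
    have hc_odd : Odd c := by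
      rw [← ZMod.intCast_eq_one_iff_odd, hc_def]
      push_cast
      simp [hx.natCast_zmod_two, hto.natCast_zmod_two]
    have hc_pos : 0 < c := pos_of_mul_pos_left (by rw [hc]; positivity) (by positivity)
    clear_value c
    lift c to ℕ using hc_pos.le
    have hc' : c * (x + 1) = x ^ t + 1 := by exact_mod_cast hc
    have hc1 : c = 1 :=
      Nat.Coprime.eq_one_of_dvd ((Nat.coprime_two_right.2 (by exact_mod_cast hc_odd)).pow_right j)
        (h ▸ Dvd.intro _ hc')
    rw [hc1, one_mul, add_left_inj] at hc'
    exact Nat.pow_right_injective hx1 (by simpa using hc'.symm)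

theorem eq_two_and_eq_one_of_geom_sum_eq_two_pow {p a n k : ℕ} (hp : 1 < p) (ha : a ≠ 0)
    (hn : 1 < n) (hk : k ≠ 0) (h : ∑ i ∈ range n, (p ^ a) ^ i = 2 ^ k) : n = 2 ∧ a = 1 := by
  obtain ⟨hq, t, rfl⟩ := (even_geom_sum_iff (by omega)).1 (h ▸ Nat.even_pow.2 ⟨even_two, hk⟩)
  rw [← two_mul, geom_sum_two_mul] at h
  obtain ⟨j, -, hj⟩ := (Nat.dvd_prime_pow Nat.prime_two).1 (Dvd.intro_left _ h)
  obtain rfl := eq_one_of_pow_add_one_eq_two_pow hq (Nat.one_lt_pow ha hp) (by omega) hj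
  exact ⟨rfl, eq_one_of_pow_add_one_eq_two_pow ((Nat.odd_pow_iff ha).1 hq) hp ha (j := k)
    (by simpa using h)⟩

theorem X_pow_sub_one_mul_cyclotomic_dvd_X_pow_sub_one_of_dvd_of_not_dvd (R : Type*) [CommRing R]
    {A N d : ℕ} (hAN : A ∣ N) (hN : N ≠ 0) (hdN : d ∣ N) (hdA : ¬ d ∣ A) :
    (X ^ A - 1) * cyclotomic d R ∣ X ^ N - 1 := by
  rw [← X_pow_sub_one_mul_prod_cyclotomic_eq_X_pow_sub_one_of_dvd R hAN hN]
  exact mul_dvd_mul_left _ (dvd_prod_of_mem _ (by simp [hdN, hN, hdA]))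

theorem exists_prime_eq_pow_of_forall_dvd {a n e : ℕ} (ha : a ≠ 0) (hn : 1 < n) (he : ¬ e ∣ a)
    (hdvd : ∀ d, d ∣ a * n → ¬ d ∣ a → e ∣ d) :
    ∃ u r s m, u.Prime ∧ n = u ^ (r + 1) ∧ a = u ^ s * m ∧ ¬ u ∣ m ∧ e = u ^ (s + 1) := by
  have key : ∀ w, w.Prime → w ∣ n → e = w ^ (a.factorization w + 1) := by
    intro w hw hwn
    obtain ⟨j, hj, rfl⟩ := (Nat.dvd_prime_pow hw).1 <| hdvd _
      (pow_succ w _ ▸ mul_dvd_mul (Nat.ordProj_dvd a w) hwn)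
      (Nat.pow_succ_factorization_not_dvd ha hw)
    congr 1
    by_contra hne
    exact he ((pow_dvd_pow w (by omega)).trans (Nat.ordProj_dvd a w))
  have hu : n.minFac.Prime := Nat.minFac_prime (by omega)
  have heu := key _ hu (Nat.minFac_dvd n)
  have hnu := Nat.eq_prime_pow_of_unique_prime_dvd (n := n) (by omega) fun {w} hw hwn => by
    have : n.minFac ∣ w ^ (a.factorization w + 1) :=
      key w hw hwn ▸ heu ▸ dvd_pow_self _ (Nat.succ_ne_zero _)
    exact ((Nat.prime_dvd_prime_iff_eq hu hw).1 (hu.dvd_of_dvd_pow this)).symm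
  obtain ⟨r, hr⟩ := Nat.exists_eq_add_one_of_ne_zero (show n.primeFactorsList.length ≠ 0 by
    rintro h0; rw [h0, pow_zero] at hnu; omega)
  exact ⟨_, r, _, _, hu, hr ▸ hnu, (Nat.ordProj_mul_ordCompl_eq_self a _).symm,
    Nat.not_dvd_ordCompl hu ha, heu⟩

theorem le_two_pow_sub_two {m : ℕ} (hm : 4 ≤ m) : m ≤ 2 ^ (m - 2) := by
  have := Nat.lt_two_pow_self (n := m - 4)
  rw [show m - 2 = m - 4 + 2 by omega, pow_add]
  omega

theorem add_two_le_of_pow_lt_pow_mul {p E F m : ℕ} (hp : 2 ≤ p) (h : p ^ E < p ^ F * m) :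
    E + 2 ≤ F + m := by
  by_contra! hlt
  have hm0 : m ≠ 0 := by rintro rfl; simp at h
  have hm : m ≤ p ^ (m - 1) := by
    have := Nat.lt_two_pow_self (n := m - 1)
    have := Nat.pow_le_pow_left hp (m - 1)
    omega
  have := Nat.pow_le_pow_right (n := p) (by omega) (show F + (m - 1) ≤ E by omega)
  rw [pow_add] at this
  have := Nat.mul_le_mul_left (p ^ F) hm
  omega

theorem eq_three_of_pow_lt_pow_two_mul {p m : ℕ} (hp : 2 ≤ p) (hm : 3 ≤ m)
    (h : p ^ m < p ^ 2 * m) : m = 3 ∧ p = 2 := by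
  rw [← Nat.sub_add_cancel (show 2 ≤ m by omega), pow_add, mul_comm,
    Nat.mul_lt_mul_left (by positivity)] at h
  have h2 := Nat.pow_le_pow_left hp (m - 2)
  obtain rfl : m = 3 := by
    by_contra hm3
    have := le_two_pow_sub_two (show 4 ≤ m by omega)
    omega
  exact ⟨rfl, by simp at h; omega⟩

theorem eq_one_and_eq_one_or_of_pow_lt_pow_mul {p u r N m : ℕ} (hp : 2 ≤ p) (hu : 2 ≤ u)
    (hN : 0 < N) (hr : r ≠ 0) (hum : ¬ u ∣ m) (h : p ^ (N * m * (u ^ r - 1)) < p ^ (N * u) * m) :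
    r = 1 ∧ (m = 1 ∨ p = 2 ∧ N = 1 ∧ m = 3 ∧ u = 2) := by
  have hm : m ≠ 0 := by rintro rfl; exact hum (dvd_zero u)
  have key := add_two_le_of_pow_lt_pow_mul hp h
  obtain ⟨v, hv⟩ : ∃ v, u ^ r = v + 1 :=
    ⟨_, (Nat.sub_add_cancel (Nat.one_le_pow r u (by omega))).symm⟩
  rw [hv, Nat.add_sub_cancel] at key
  rcases Nat.lt_or_ge r 2 with hr1 | hr2
  · obtain rfl : r = 1 := by omega
    obtain rfl : u = v + 1 := by simpa using hv
    refine ⟨rfl, or_iff_not_imp_left.2 fun hm1 => ?_⟩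
    obtain rfl : v = 1 := by
      by_contra hv1
      obtain ⟨m, rfl⟩ : ∃ m', m = m' + 2 := ⟨m - 2, by omega⟩
      obtain ⟨v, rfl⟩ : ∃ v', v = v' + 2 := ⟨v - 2, by omega⟩
      nlinarith [Nat.le_mul_of_pos_left m hN, Nat.zero_le (N * m * v), Nat.zero_le (N * v)]
    have hm3 : 3 ≤ m := by omega
    obtain rfl : N = 1 := by nlinarith
    exact (eq_three_of_pow_lt_pow_two_mul hp hm3 (by simpa using h)).symm.imp_right
      fun hm => ⟨rfl, hm, rfl⟩
  · have := Nat.mul_le_mul_right u hu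
    have := Nat.mul_le_mul_left m (show u + 1 ≤ v by
      have := Nat.pow_le_pow_right (by omega) hr2 (n := u); rw [sq] at this; omega)
    have := Nat.le_mul_of_pos_left u (Nat.pos_of_ne_zero hm)
    nlinarith

section OrderOf

variable {ℓ : ℕ} [hℓ : Fact ℓ.Prime]

theorem dvd_pow_sub_one_of_orderOf_dvd {x d : ℕ} (hx : 0 < x) (h : orderOf (x : ZMod ℓ) ∣ d) :
    ℓ ∣ x ^ d - 1 := by
  rw [← ZMod.natCast_eq_zero_iff, Nat.cast_sub (Nat.one_le_pow _ _ hx), Nat.cast_pow,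
    orderOf_dvd_iff_pow_eq_one.1 h, Nat.cast_one, sub_self]

theorem orderOf_dvd_of_dvd_cyclotomic_eval {x d : ℕ} (hd : 0 < d)
    (h : (ℓ : ℤ) ∣ (cyclotomic d ℤ).eval (x : ℤ)) : orderOf (x : ZMod ℓ) ∣ d := by
  have hroot : IsRoot (cyclotomic d (ZMod ℓ)) (Nat.castRingHom (ZMod ℓ) x) := by
    rw [IsRoot.def, ← map_cyclotomic_int, eq_natCast, ← Int.cast_natCast, eval_intCast_map,
      eq_intCast, ZMod.intCast_zmod_eq_zero_iff_dvd]
    exact h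
  simpa [← orderOf_units] using orderOf_root_cyclotomic_dvd hd hroot

theorem orderOf_dvd_of_pow_mul_sub_one_eq {p k A N d : ℕ} (hp : 2 ≤ p) (hAN : A ∣ N) (hN : N ≠ 0)
    (h : ℓ ^ k * (p ^ A - 1) = p ^ N - 1) (hdN : d ∣ N) (hdA : ¬ d ∣ A) :
    orderOf (p : ZMod ℓ) ∣ d := by
  have hA : A ≠ 0 := by rintro rfl; exact hN (zero_dvd_iff.1 hAN)
  have hd : 1 < d := by
    rcases Nat.lt_or_ge d 2 with hd | hd
    · interval_cases d
      · exact absurd (zero_dvd_iff.1 hdN) hN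
      · exact absurd (one_dvd A) hdA
    · exact hd
  have hℤ : (ℓ : ℤ) ^ k * ((p : ℤ) ^ A - 1) = (p : ℤ) ^ N - 1 := by
    have := Nat.one_le_pow A p (by omega)
    have := Nat.one_le_pow N p (by omega)
    exact_mod_cast h
  have hΦ : (cyclotomic d ℤ).eval (p : ℤ) ∣ (ℓ : ℤ) ^ k := by
    have := eval_dvd (x := (p : ℤ))
      (X_pow_sub_one_mul_cyclotomic_dvd_X_pow_sub_one_of_dvd_of_not_dvd ℤ hAN hN hdN hdA)
    simp only [eval_mul, eval_sub, eval_pow, eval_X, eval_one] at this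
    rw [← hℤ, mul_comm ((ℓ : ℤ) ^ k)] at this
    refine (mul_dvd_mul_iff_left ?_).1 this
    have : (2 : ℤ) ≤ (p : ℤ) ^ A := by exact_mod_cast (Nat.one_lt_pow hA hp)
    omega
  obtain ⟨j, -, hj⟩ := (Nat.dvd_prime_pow hℓ.out).1
    (by simpa [Int.natAbs_pow] using Int.natAbs_dvd_natAbs.2 hΦ)
  have hgt := sub_one_lt_natAbs_cyclotomic_eval hd (show p ≠ 1 by omega)
  have hj0 : j ≠ 0 := by rintro rfl; rw [hj, pow_zero] at hgt; omega
  exact orderOf_dvd_of_dvd_cyclotomic_eval (by omega)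
    (Int.natCast_dvd.2 (hj ▸ dvd_pow_self ℓ hj0))

variable (hℓ2 : Odd ℓ)
include hℓ2

theorem pow_dvd_of_pow_mul_sub_one_eq {q n k : ℕ} (hq : 1 < q) (hn : n ≠ 0)
    (h : ℓ ^ k * (q - 1) = q ^ n - 1) (hℓq : ℓ ∣ q - 1) : ℓ ^ k ∣ n := by
  have hlte := padicValNat.pow_sub_pow hℓ2 hq hℓq
    (not_dvd_of_dvd_sub_one hℓ.out.one_lt.ne' (by omega) hℓq) hn
  rw [one_pow, ← h, padicValNat.mul (pow_ne_zero _ hℓ.out.ne_zero) (by omega),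
    padicValNat.prime_pow, add_comm, add_left_cancel_iff] at hlte
  exact hlte ▸ pow_padicValNat_dvd

theorem pow_dvd_sub_one_mul_div_orderOf {x N k : ℕ} (hx : 1 < x) (hℓx : ¬ ℓ ∣ x) (hN : N ≠ 0)
    (he : orderOf (x : ZMod ℓ) ∣ N) (h : ℓ ^ k ∣ x ^ N - 1) :
    ℓ ^ k ∣ (x ^ orderOf (x : ZMod ℓ) - 1) * (N / orderOf (x : ZMod ℓ)) := by
  set e := orderOf (x : ZMod ℓ)
  have he0 : e ≠ 0 := by rintro h0; rw [h0, zero_dvd_iff] at he; exact hN he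
  have hNe : N / e ≠ 0 := (Nat.div_pos (Nat.le_of_dvd (by omega) he) (by omega)).ne'
  have hxe : 1 < x ^ e := Nat.one_lt_pow he0 hx
  have hℓe : ℓ ∣ x ^ e - 1 := dvd_pow_sub_one_of_orderOf_dvd (by omega) dvd_rfl
  have hlte := padicValNat.pow_sub_pow hℓ2 hxe hℓe (fun h' => hℓx (hℓ.out.dvd_of_dvd_pow h')) hNe
  rw [one_pow, ← pow_mul, Nat.mul_div_cancel' he, ← padicValNat.mul (by omega) hNe] at hlte
  have hxN : x ^ N - 1 ≠ 0 := by have := Nat.one_lt_pow hN hx; omega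
  exact (padicValNat_dvd_iff_le (Nat.mul_ne_zero (by omega) hNe)).2
    (hlte ▸ (padicValNat_dvd_iff_le hxN).1 h)

theorem pow_dvd_sub_one_mul_of_orderOf_eq_prime_pow {p u s m r k : ℕ} (hp : 1 < p)
    (hℓp : ¬ ℓ ∣ p) (hu : u.Prime) (hm : m ≠ 0) (he : orderOf (p : ZMod ℓ) = u ^ (s + 1))
    (h : ℓ ^ k ∣ p ^ (u ^ s * m * u ^ (r + 1)) - 1) :
    ℓ ^ k ∣ (p ^ u ^ (s + 1) - 1) * m := by
  have hN : u ^ s * m * u ^ (r + 1) = u ^ (s + 1) * (u ^ r * m) := by ring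
  have hdvd := pow_dvd_sub_one_mul_div_orderOf hℓ2 hp hℓp (by simp [hm, hu.ne_zero])
    (he ▸ hN ▸ dvd_mul_right _ _) h
  rw [he, hN, Nat.mul_div_cancel_left _ (pow_pos hu.pos _), mul_left_comm] at hdvd
  have hℓu : Nat.Coprime ℓ u := by
    refine (Nat.coprime_primes hℓ.out hu).2 fun hℓu => ?_
    have := ZMod.orderOf_lt hℓ.out.one_lt (p : ZMod ℓ)
    have := Nat.le_self_pow (n := s + 1) (by omega) u
    omega
  exact (hℓu.pow k r).dvd_of_dvd_mul_left hdvd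

theorem prime_and_eq_pow_of_geom_sum_eq_odd_prime_pow {p a n k : ℕ} (hp : 2 ≤ p) (ha : a ≠ 0)
    (hn : 1 < n) (hk : k ≠ 0) (h : ∑ i ∈ range n, (p ^ a) ^ i = ℓ ^ k) :
    n.Prime ∧ ((∃ i : ℕ, a = n ^ i) ∨ (p = 2 ∧ a = 3 ∧ n = 2)) := by
  have hq : 1 < p ^ a := Nat.one_lt_pow ha hp
  have hmul : ℓ ^ k * (p ^ a - 1) = p ^ (a * n) - 1 := by
    rw [← h, geom_sum_mul_sub_one, ← pow_mul]
  have hlt : p ^ (a * (n - 1)) < ℓ ^ k := pow_mul p a (n - 1) ▸ h ▸ pow_pred_lt_geom_sum _ hn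
  have hℓN : ℓ ^ k ∣ p ^ (a * n) - 1 := hmul ▸ dvd_mul_right _ _
  have hℓp : ¬ ℓ ∣ p := fun h' => not_dvd_of_dvd_sub_one hℓ.out.one_lt.ne' (by positivity)
    ((dvd_pow_self ℓ hk).trans hℓN) (dvd_pow h' (by positivity))
  set e := orderOf (p : ZMod ℓ)
  have he_a : ¬ e ∣ a := fun hea =>
    (h ▸ self_lt_geom_sum hq hn).not_ge <| Nat.le_of_dvd (by omega) <|
      pow_dvd_of_pow_mul_sub_one_eq hℓ2 hq (by omega) (pow_mul p a n ▸ hmul)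
        (dvd_pow_sub_one_of_orderOf_dvd (by omega) hea)
  obtain ⟨u, r, s, m, hu, rfl, rfl, hum, he⟩ := exists_prime_eq_pow_of_forall_dvd ha hn he_a
    fun d hdN hdA =>
      orderOf_dvd_of_pow_mul_sub_one_eq hp (dvd_mul_right _ _) (by positivity) hmul hdN hdA
  have hm0 : 0 < m := Nat.pos_of_ne_zero fun hm => hum (hm ▸ dvd_zero u)
  have hdvd := pow_dvd_sub_one_mul_of_orderOf_eq_prime_pow hℓ2 (by omega) hℓp hu hm0.ne' he hℓN
  have hbound : p ^ (u ^ s * m * (u ^ (r + 1) - 1)) < p ^ (u ^ s * u) * m := by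
    have hpe : 1 < p ^ u ^ (s + 1) := Nat.one_lt_pow (pow_ne_zero _ hu.ne_zero) hp
    rw [← pow_succ]
    calc p ^ (u ^ s * m * (u ^ (r + 1) - 1)) < ℓ ^ k := hlt
      _ ≤ (p ^ u ^ (s + 1) - 1) * m := Nat.le_of_dvd (Nat.mul_pos (by omega) hm0) hdvd
      _ < p ^ u ^ (s + 1) * m := Nat.mul_lt_mul_of_pos_right (by omega) hm0
  obtain ⟨hr, hm | ⟨rfl, hs, hm, rfl⟩⟩ := eq_one_and_eq_one_or_of_pow_lt_pow_mul hp hu.two_le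
    (pow_pos hu.pos s) (Nat.succ_ne_zero r) hum hbound
  · obtain rfl : r = 0 := by omega
    exact ⟨by simpa using hu, Or.inl ⟨s, by rw [hm, mul_one, zero_add, pow_one]⟩⟩
  · obtain rfl : r = 0 := by omega
    exact ⟨Nat.prime_two, Or.inr ⟨rfl, by rw [hs, hm, one_mul], rfl⟩⟩

end OrderOf

/-- If `p` is a prime, `a ≥ 1`, `n > 1`, and `(p^(a*n) - 1)/(p^a - 1)` is a power of a
prime, then `n` is a prime and either `a` is a power of `n`, or `p = 2`, `a = 3`, `n = 2`. -/
theorem prime_power_quotient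
    (p a n : ℕ) (hp : p.Prime) (ha : 1 ≤ a) (hn : 1 < n)
    (h : ∃ ℓ k : ℕ, ℓ.Prime ∧ 1 ≤ k ∧ (p ^ (a * n) - 1) / (p ^ a - 1) = ℓ ^ k) :
    n.Prime ∧ ((∃ i : ℕ, a = n ^ i) ∨ (p = 2 ∧ a = 3 ∧ n = 2)) := by
  obtain ⟨ℓ, k, hℓ, hk, hQ⟩ := h
  have hsum : ∑ i ∈ range n, (p ^ a) ^ i = ℓ ^ k := by
    rw [Nat.geomSum_eq (Nat.one_lt_pow (by omega) hp.two_le), ← pow_mul, hQ]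
  rcases hℓ.eq_two_or_odd' with rfl | hℓ2
  · obtain ⟨rfl, rfl⟩ :=
      eq_two_and_eq_one_of_geom_sum_eq_two_pow hp.one_lt (by omega) hn (by omega) hsum
    exact ⟨Nat.prime_two, Or.inl ⟨0, rfl⟩⟩
  · have : Fact ℓ.Prime := ⟨hℓ⟩
    exact prime_and_eq_pow_of_geom_sum_eq_odd_prime_pow hℓ2 hp.two_le (by omega) hn (by omega) hsum
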